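/- arXiv:1603.05433 — 2 statements merged into one kernel-verified Lean document; each statement's English description precedes it below -/
import Mathlib

section
/- Let m, k, l be natural numbers with k + l < m − 1, and let C_{j,h}(m,k,l) be the coefficients of the dual constrained Bernstein basis in the Bernstein basis, D_j^{(m,k,l)} = Σ_{h=k+1}^{m−l−1} C_{j,h} Bᵐ_h. Then C_{k+1,m−l−1} = C(m,k+1)^{-1} C(m,l+1)^{-1} · (−1)^{m−k−l−2} (m+k+l+3)! / ((m−k−l−2)! (2k+2)! (2l+2)!). -/
/-!
Write `a = k + 1`, `b = l + 1`, `n = m - k - l - 2`, and pair polynomials by `∫₀¹ f g`.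
Multiplying by `(u + (1 - u))ⁿ⁻ᵖ` writes `uᵃ⁺ᵖ (1 - u)ᵇ` (`p ≤ n`) as a combination of the
Bernstein polynomials `Bᵐ_a, …, Bᵐ_{a+n}` whose first coefficient is `C(m,a)⁻¹` when `p = 0`, so the
dual polynomial `D_a` pairs with it to `δ_{p,0} / C(m,a)`. On the other hand, the beta integral
turns `∫ Bᵐ_{a+i} · Σₚ rₚ uᵃ⁺ᵖ (1 - u)ᵇ`, for suitable alternating weights `rₚ`, into an `n`-th
forward difference of a polynomial of degree `i` in `p`, which vanishes unless `i = n`. Pairing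
`D_a = Σᵢ C_{a,a+i} Bᵐ_{a+i}` with this combination in both ways gives
`C_{a,a+n} · C(m,b) = r₀ / C(m,a)`.
-/

open Finset intervalIntegral Polynomial
open scoped Nat

theorem integral_pow_mul_one_sub_pow (a b : ℕ) :
    ∫ u in (0:ℝ)..1, u ^ a * (1 - u) ^ b = (a ! * b ! / (a + b + 1)! : ℝ) := by
  have hbeta := Complex.betaIntegral_eq_Gamma_mul_div (a + 1) (b + 1)
    (by simp; positivity) (by simp; positivity)
  simp only [Complex.betaIntegral, add_sub_cancel_right] at hbeta
  rw [show (a + 1 + (b + 1) : ℂ) = ((a + b + 1 : ℕ) : ℂ) + 1 by push_cast; ring,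
    Complex.Gamma_nat_eq_factorial, Complex.Gamma_nat_eq_factorial,
    Complex.Gamma_nat_eq_factorial] at hbeta
  apply Complex.ofReal_injective
  push_cast
  rw [← hbeta, ← intervalIntegral.integral_ofReal]
  refine intervalIntegral.integral_congr fun u _ => ?_
  push_cast
  simp only [Complex.cpow_natCast]

theorem sum_range_alternating_choose_mul_ascFactorial {i n : ℕ} (hi : i ≤ n) (a : ℕ) :
    ∑ p ∈ range (n + 1), (-1 : ℝ) ^ (n - p) * n.choose p * (a + p).ascFactorial i
      = if i = n then (n ! : ℝ) else 0 := by
  set P : ℝ[X] := (ascPochhammer ℝ i).comp (X + C (a : ℝ))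
  have hPmonic : P.Monic := (monic_ascPochhammer ℝ i).comp_X_add_C _
  have hPdeg : P.natDegree = i := by
    rw [natDegree_comp, ascPochhammer_natDegree, natDegree_X_add_C, mul_one]
  have hPeval : ∀ p : ℕ, P.eval (p : ℝ) = (a + p).ascFactorial i := by
    intro p
    rw [eval_comp, ← ascPochhammer_nat_eq_ascFactorial, ascPochhammer_eval_cast]
    simp [add_comm]
  have hsum : ∑ p ∈ range (n + 1), (-1 : ℝ) ^ (n - p) * n.choose p * (a + p).ascFactorial i
      = (fwdDiff 1)^[n] P.eval 0 := by
    rw [fwdDiff_iter_eq_sum_shift]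
    refine sum_congr rfl fun p _ => ?_
    simp [hPeval]
  rw [hsum]
  split_ifs with hin
  · subst hin
    have hfactorial := P.fwdDiff_iter_degree_eq_factorial
    rw [hPdeg, hPmonic.leadingCoeff, one_smul] at hfactorial
    rw [hfactorial]
    rfl
  · rw [Polynomial.fwdDiff_iter_eq_zero_of_degree_lt (by omega)]
    rfl

noncomputable def integralPairing : ℝ[X] →ₗ[ℝ] ℝ[X] →ₗ[ℝ] ℝ :=
  LinearMap.mk₂ ℝ (fun f g => ∫ u in (0:ℝ)..1, f.eval u * g.eval u)
    (fun f₁ f₂ g => by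
      simp only [eval_add, add_mul]
      exact integral_add ((f₁.continuous.mul g.continuous).intervalIntegrable _ _)
        ((f₂.continuous.mul g.continuous).intervalIntegrable _ _))
    (fun c f g => by simp only [eval_smul, smul_eq_mul, mul_assoc, integral_const_mul])
    (fun f g₁ g₂ => by
      simp only [eval_add, mul_add]
      exact integral_add ((f.continuous.mul g₁.continuous).intervalIntegrable _ _)
        ((f.continuous.mul g₂.continuous).intervalIntegrable _ _))
    (fun c f g => by simp only [eval_smul, smul_eq_mul, mul_left_comm _ c, integral_const_mul])

theorem integralPairing_apply (f g : ℝ[X]) :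
    integralPairing f g = ∫ u in (0:ℝ)..1, f.eval u * g.eval u := rfl

theorem integralPairing_bernsteinPolynomial_pow_mul_one_sub_pow {N h : ℕ} (hh : h ≤ N)
    (c d : ℕ) :
    integralPairing (bernsteinPolynomial ℝ N h) (X ^ c * (1 - X) ^ d : ℝ[X])
      = N.choose h * ((h + c)! * (N - h + d)! / (N + c + d + 1)! : ℝ) := by
  have hintegrand : ∀ u : ℝ,
      (bernsteinPolynomial ℝ N h).eval u * (X ^ c * (1 - X) ^ d : ℝ[X]).eval u
        = N.choose h * (u ^ (h + c) * (1 - u) ^ (N - h + d)) := by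
    intro u
    simp only [bernsteinPolynomial, eval_mul, eval_natCast, eval_pow, eval_X, eval_sub, eval_one]
    ring
  simp only [integralPairing_apply, hintegrand, integral_const_mul, integral_pow_mul_one_sub_pow]
  rw [show h + c + (N - h + d) + 1 = N + c + d + 1 by omega]

theorem pow_mul_one_sub_pow_eq_sum_bernsteinPolynomial (a b n : ℕ) :
    (X ^ a * (1 - X) ^ b : ℝ[X]) = ∑ q ∈ range (n + 1),
      ((n.choose q : ℝ) / (a + b + n).choose (a + q)) •
        bernsteinPolynomial ℝ (a + b + n) (a + q) := by
  calc (X ^ a * (1 - X) ^ b : ℝ[X])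
      = X ^ a * (1 - X) ^ b * (X + (1 - X)) ^ n := by simp
    _ = _ := by
      rw [add_pow, mul_sum]
      refine sum_congr rfl fun q hq => ?_
      have hq : q ≤ n := Nat.lt_succ_iff.mp (mem_range.mp hq)
      have hchoose : ((a + b + n).choose (a + q) : ℝ) ≠ 0 := by
        exact_mod_cast (Nat.choose_pos (by omega)).ne'
      have hcoeff : C ((n.choose q : ℝ) / (a + b + n).choose (a + q))
          * ((a + b + n).choose (a + q) : ℝ[X]) = n.choose q := by
        rw [← C_eq_natCast, ← C_mul, div_mul_cancel₀ _ hchoose, C_eq_natCast]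
      rw [bernsteinPolynomial, smul_eq_C_mul, show a + b + n - (a + q) = b + (n - q) by omega]
      linear_combination (-(X : ℝ[X]) ^ (a + q) * (1 - X) ^ (b + (n - q))) * hcoeff

theorem integralPairing_pow_mul_one_sub_pow_of_dual {a b n : ℕ} {f : ℝ[X]}
    (hf : ∀ h ∈ Icc a (a + n),
      integralPairing f (bernsteinPolynomial ℝ (a + b + n) h) = if a = h then 1 else 0)
    {p : ℕ} (hp : p ≤ n) :
    integralPairing f (X ^ (a + p) * (1 - X) ^ b)
      = if p = 0 then (((a + b + n).choose a : ℝ))⁻¹ else 0 := by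
  have hsplit := pow_mul_one_sub_pow_eq_sum_bernsteinPolynomial (a + p) b (n - p)
  rw [show a + p + b + (n - p) = a + b + n by omega] at hsplit
  rw [hsplit, map_sum, sum_eq_single 0]
  · rw [map_smul, hf _ (mem_Icc.mpr ⟨by omega, by omega⟩), smul_eq_mul]
    by_cases hp0 : p = 0
    · subst hp0
      simp
    · rw [if_neg (by omega), if_neg hp0, mul_zero]
  · intro q hq hq0
    have hqn := mem_range.mp hq
    rw [map_smul, hf _ (mem_Icc.mpr ⟨by omega, by omega⟩), if_neg (by omega), smul_zero]
  · simp

noncomputable def dualCornerCoeff (a b n p : ℕ) : ℝ :=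
  (-1) ^ (n - p) * n.choose p * (2 * a + 2 * b + n + 1 + p)! / (n ! * (2 * b)! * (2 * a + p)!)

/-- `(a + b + n).choose b` times the last dual constrained Bernstein polynomial `D_{a+n}` of degree
`a + b + n` (in the notation of the statement, `a = k + 1` and `b = l + 1`). -/
noncomputable def dualCorner (a b n : ℕ) : ℝ[X] :=
  ∑ p ∈ range (n + 1), dualCornerCoeff a b n p • (X ^ (a + p) * (1 - X) ^ b)

theorem integralPairing_dualCorner_of_dual {a b n : ℕ} {f : ℝ[X]}
    (hf : ∀ h ∈ Icc a (a + n),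
      integralPairing f (bernsteinPolynomial ℝ (a + b + n) h) = if a = h then 1 else 0) :
    integralPairing f (dualCorner a b n)
      = dualCornerCoeff a b n 0 * (((a + b + n).choose a : ℝ))⁻¹ := by
  rw [dualCorner, map_sum, sum_eq_single 0]
  · rw [map_smul, integralPairing_pow_mul_one_sub_pow_of_dual hf n.zero_le, if_pos rfl,
      smul_eq_mul]
  · intro p hp hp0
    rw [map_smul, integralPairing_pow_mul_one_sub_pow_of_dual hf (by simp at hp; omega),
      if_neg hp0, smul_zero]
  · simp

theorem integralPairing_bernsteinPolynomial_dualCorner {a b n h : ℕ} (hh : h ∈ Icc a (a + n)) :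
    integralPairing (bernsteinPolynomial ℝ (a + b + n) h) (dualCorner a b n)
      = if h = a + n then ((a + b + n).choose b : ℝ) else 0 := by
  rw [mem_Icc] at hh
  obtain ⟨i, hin, rfl⟩ : ∃ i ≤ n, h = a + i := ⟨h - a, by omega, by omega⟩
  have hterm : ∀ p, dualCornerCoeff a b n p * ((a + b + n).choose (a + i)
        * ((a + i + (a + p))! * (a + b + n - (a + i) + b)! / (a + b + n + (a + p) + b + 1)! : ℝ))
      = (a + b + n).choose (a + i) * (2 * b + n - i)! / (n ! * (2 * b)!)
        * ((-1 : ℝ) ^ (n - p) * n.choose p * (2 * a + 1 + p).ascFactorial i) := by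
    intro p
    have hasc : ((2 * a + p)! : ℝ) * (2 * a + 1 + p).ascFactorial i = (a + i + (a + p))! := by
      rw [← Nat.cast_mul, show 2 * a + 1 + p = 2 * a + p + 1 by omega,
        Nat.factorial_mul_ascFactorial, show 2 * a + p + i = a + i + (a + p) by omega]
    rw [dualCornerCoeff, ← hasc, show a + b + n - (a + i) + b = 2 * b + n - i by omega,
      show a + b + n + (a + p) + b + 1 = 2 * a + 2 * b + n + 1 + p by omega]
    field_simp
  simp only [dualCorner, map_sum, map_smul, smul_eq_mul,
    integralPairing_bernsteinPolynomial_pow_mul_one_sub_pow (show a + i ≤ a + b + n by omega),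
    hterm, ← mul_sum, sum_range_alternating_choose_mul_ascFactorial hin, add_right_inj]
  split_ifs with hi
  · subst hi
    rw [Nat.add_sub_cancel, show a + b + i = a + i + b by omega, Nat.choose_symm_add]
    field_simp
  · rw [mul_zero]

theorem integralPairing_sum_bernsteinPolynomial_dualCorner (a b n : ℕ) (c : ℕ → ℝ) :
    integralPairing (∑ h ∈ Icc a (a + n), c h • bernsteinPolynomial ℝ (a + b + n) h)
        (dualCorner a b n)
      = c (a + n) * (a + b + n).choose b := by
  rw [map_sum, LinearMap.sum_apply]
  simp only [map_smul, LinearMap.smul_apply, smul_eq_mul]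
  rw [sum_congr rfl fun h hh => by rw [integralPairing_bernsteinPolynomial_dualCorner hh]]
  simp [mul_ite]

theorem dual_basis_coeff_corner_general (m k l : ℕ) (hklm : k + l + 1 < m)
    (D : ℕ → Polynomial ℝ) (C : ℕ → ℕ → ℝ)
    (hdual : ∀ j ∈ Finset.Icc (k + 1) (m - l - 1), ∀ h ∈ Finset.Icc (k + 1) (m - l - 1),
      (∫ u in (0:ℝ)..1, (D j).eval u * (bernsteinPolynomial ℝ m h).eval u)
        = if j = h then 1 else 0)
    (hC : ∀ j ∈ Finset.Icc (k + 1) (m - l - 1),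
      D j = ∑ h ∈ Finset.Icc (k + 1) (m - l - 1), C j h • bernsteinPolynomial ℝ m h) :
    C (k + 1) (m - l - 1)
      = ((m.choose (k + 1) : ℝ))⁻¹ * ((m.choose (l + 1) : ℝ))⁻¹ *
          ((-1 : ℝ) ^ (m - k - l - 2) * ((m + k + l + 3).factorial : ℝ) /
            (((m - k - l - 2).factorial : ℝ) * ((2 * k + 2).factorial : ℝ) *
              ((2 * l + 2).factorial : ℝ))) := by
  obtain ⟨n, rfl⟩ : ∃ n, m = k + 1 + (l + 1) + n := ⟨m - k - l - 2, by omega⟩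
  rw [show k + 1 + (l + 1) + n - l - 1 = k + 1 + n by omega] at hdual hC ⊢
  have hfirst : k + 1 ∈ Icc (k + 1) (k + 1 + n) := by simp
  have hpairing := integralPairing_sum_bernsteinPolynomial_dualCorner (k + 1) (l + 1) n (C (k + 1))
  rw [← hC _ hfirst, integralPairing_dualCorner_of_dual (hdual _ hfirst)] at hpairing
  have hchoose : ((k + 1 + (l + 1) + n).choose (l + 1) : ℝ) ≠ 0 := by
    exact_mod_cast (Nat.choose_pos (by omega)).ne'
  rw [eq_div_of_mul_eq hchoose hpairing.symm, dualCornerCoeff,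
    show k + 1 + (l + 1) + n - k - l - 2 = n by omega,
    show k + 1 + (l + 1) + n + k + l + 3 = 2 * (k + 1) + 2 * (l + 1) + n + 1 by omega]
  simp only [Nat.sub_zero, Nat.choose_zero_right, Nat.cast_one, add_zero, mul_add_one]
  field_simp

theorem dual_basis_coeff_corner (m k l : ℕ) (hklm : k + l + 1 < m)
    (D : ℕ → Polynomial ℝ) (C : ℕ → ℕ → ℝ)
    (hmem : ∀ j ∈ Finset.Icc (k + 1) (m - l - 1),
      D j ∈ Submodule.span ℝ
        ((fun i => bernsteinPolynomial ℝ m i) '' Set.Icc (k + 1) (m - l - 1)))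
    (hdual : ∀ j ∈ Finset.Icc (k + 1) (m - l - 1), ∀ h ∈ Finset.Icc (k + 1) (m - l - 1),
      (∫ u in (0:ℝ)..1, (D j).eval u * (bernsteinPolynomial ℝ m h).eval u)
        = if j = h then 1 else 0)
    (hC : ∀ j ∈ Finset.Icc (k + 1) (m - l - 1),
      D j = ∑ h ∈ Finset.Icc (k + 1) (m - l - 1), C j h • bernsteinPolynomial ℝ m h) :
    C (k + 1) (m - l - 1)
      = ((m.choose (k + 1) : ℝ))⁻¹ * ((m.choose (l + 1) : ℝ))⁻¹ *
          ((-1 : ℝ) ^ (m - k - l - 2) * ((m + k + l + 3).factorial : ℝ) /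
            (((m - k - l - 2).factorial : ℝ) * ((2 * k + 2).factorial : ℝ) *
              ((2 * l + 2).factorial : ℝ))) :=
  dual_basis_coeff_corner_general m k l hklm D C hdual hC
end

section
/- Let n, m, r, d be natural numbers with r ≤ m ≤ n, let p₀,…,pₙ ∈ ℝᵈ and q₀,…,qₘ ∈ ℝᵈ, and set P(u) = Σ_{i=0}^{n} pᵢ Bⁿᵢ(u), Q(u) = Σ_{j=0}^{m} qⱼ Bᵐⱼ(u). Then the derivatives of Q and P agree at u = 1 up to order r, i.e., Q⁽ʲ⁾(1) = P⁽ʲ⁾(1) for j = 0,1,…,r, if and only if for each j = 0,1,…,r: q_{m−j} = (−1)ʲ C(n,j) C(m,j)^{-1} Δʲ p_{n−j} − Σ_{h=1}^{j} (−1)ʰ C(j,h) q_{m−j+h}, where Δʲ denotes the iterated forward difference on the control points. -/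
/-!
Differentiating a Bézier curve lowers its degree by one and replaces the control points by their
forward differences: `Q' = m · Σ B^{m-1}_i (Δq)_i`. Iterating, `Q⁽ʲ⁾(1) = m(m-1)⋯(m-j+1) Δʲq_{m-j}`,
since only the last Bernstein polynomial is nonzero at `1`. Comparing with the same formula for `P`
and expanding `Δʲq_{m-j}` by the binomial formula isolates `q_{m-j}`.
-/

open Finset intervalIntegral

/-- The Bernstein basis polynomial `B^n_j(u) = C(n,j) u^j (1-u)^(n-j)`. -/
noncomputable def bern (n j : ℕ) (u : ℝ) : ℝ := (n.choose j : ℝ) * u ^ j * (1 - u) ^ (n - j)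

/-- Iterated forward difference `Δ^j α_k` acting on the indices of control points. -/
noncomputable def fdiffE (d : ℕ) : ℕ → (ℕ → EuclideanSpace ℝ (Fin d)) → ℕ → EuclideanSpace ℝ (Fin d)
  | 0, w, k => w k
  | j + 1, w, k => fdiffE d j w (k + 1) - fdiffE d j w k

lemma fdiffE_eq_fwdDiff_iter (d j : ℕ) (w : ℕ → EuclideanSpace ℝ (Fin d)) :
    fdiffE d j w = (fwdDiff 1)^[j] w := by
  induction j with
  | zero => rfl
  | succ j ih =>
    ext1 k
    rw [Function.iterate_succ_apply', fdiffE, ih, fwdDiff]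

lemma neg_one_pow_smul_fwdDiff_iter {R G : Type*} [Ring R] [AddCommGroup G] [Module R G]
    (f : ℕ → G) (j k : ℕ) :
    (-1 : R) ^ j • (fwdDiff 1)^[j] f k
      = f k + ∑ h ∈ Icc 1 j, ((-1 : R) ^ h * (j.choose h : R)) • f (k + h) := by
  rw [fwdDiff_iter_eq_sum_shift, smul_sum, range_eq_Ico, sum_eq_sum_Ico_succ_bot j.succ_pos,
    Nat.succ_eq_add_one, zero_add, Ico_add_one_right_eq_Icc]
  congr 1
  · rw [← Int.cast_smul_eq_zsmul R, smul_smul]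
    simp [← pow_add, Even.neg_one_pow ⟨j, rfl⟩]
  refine sum_congr rfl fun h hh => ?_
  obtain ⟨i, rfl⟩ := Nat.exists_eq_add_of_le (mem_Icc.1 hh).2
  rw [← Int.cast_smul_eq_zsmul R, smul_smul, Nat.add_sub_cancel_left, smul_eq_mul, mul_one]
  push_cast
  rw [pow_add, mul_assoc, ← mul_assoc ((-1 : R) ^ i), ← pow_add, Even.neg_one_pow ⟨i, rfl⟩,
    one_mul]

lemma bern_eq_eval_bernsteinPolynomial (n j : ℕ) (u : ℝ) :
    bern n j u = (bernsteinPolynomial ℝ n j).eval u := by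
  simp [bern, bernsteinPolynomial]

section Bezier

variable {E : Type*} [NormedAddCommGroup E] [NormedSpace ℝ E]

noncomputable def bezier (m : ℕ) (q : ℕ → E) (u : ℝ) : E :=
  ∑ i ∈ range (m + 1), bern m i u • q i

lemma bezier_one (m : ℕ) (q : ℕ → E) : bezier m q 1 = q m := by
  simp [bezier, bern_eq_eval_bernsteinPolynomial, bernsteinPolynomial.eval_at_1]

lemma sum_derivative_bernsteinPolynomial_smul (m : ℕ) (q : ℕ → E) (u : ℝ) :
    ∑ i ∈ range (m + 2), (Polynomial.derivative (bernsteinPolynomial ℝ (m + 1) i)).eval u • q i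
      = ((m + 1 : ℕ) : ℝ) • bezier m (fwdDiff 1 q) u := by
  let b ν := (bernsteinPolynomial ℝ m ν).eval u
  -- summation by parts; the boundary term at `m + 1` vanishes because `B^m_{m+1} = 0`
  have shift : ∑ ν ∈ range (m + 1), b (ν + 1) • q (ν + 1) + b 0 • q 0
      = ∑ ν ∈ range (m + 1), b ν • q ν := by
    rw [← sum_range_succ' (fun ν => b ν • q ν), sum_range_succ,
      show b (m + 1) = 0 by simp [b, bernsteinPolynomial.eq_zero_of_lt], zero_smul, add_zero]
  rw [sum_range_succ', bernsteinPolynomial.derivative_zero]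
  simp only [bernsteinPolynomial.derivative_succ, bezier, bern_eq_eval_bernsteinPolynomial,
    fwdDiff, Polynomial.eval_mul, Polynomial.eval_sub, Polynomial.eval_neg,
    Polynomial.eval_natCast, add_tsub_cancel_right, mul_sub, sub_smul, mul_smul, smul_sub,
    sum_sub_distrib, ← smul_sum]
  linear_combination (norm := module) (-((m + 1 : ℕ) : ℝ)) • shift

lemma hasDerivAt_bezier_succ (m : ℕ) (q : ℕ → E) (u : ℝ) :
    HasDerivAt (bezier (m + 1) q) (((m + 1 : ℕ) : ℝ) • bezier m (fwdDiff 1 q) u) u := by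
  rw [← sum_derivative_bernsteinPolynomial_smul]
  have bezier_eq : bezier (m + 1) q
      = fun u => ∑ i ∈ range (m + 2), (bernsteinPolynomial ℝ (m + 1) i).eval u • q i := by
    ext u
    simp [bezier, bern_eq_eval_bernsteinPolynomial]
  rw [bezier_eq]
  exact HasDerivAt.fun_sum fun i _ => (Polynomial.hasDerivAt _ u).smul_const (q i)

lemma iteratedDeriv_bezier {m j : ℕ} (hj : j ≤ m) (q : ℕ → E) :
    iteratedDeriv j (bezier m q)
      = (m.descFactorial j : ℝ) • bezier (m - j) ((fwdDiff 1)^[j] q) := by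
  induction j with
  | zero => simp
  | succ j ih =>
    obtain ⟨k, hk⟩ : ∃ k, m - j = k + 1 := ⟨m - j - 1, by omega⟩
    ext u
    rw [iteratedDeriv_succ, ih (by omega), hk, ((hasDerivAt_bezier_succ k _ u).const_smul _).deriv,
      Nat.descFactorial_succ, hk, show m - (j + 1) = k by omega, Function.iterate_succ_apply',
      Pi.smul_apply, smul_smul, mul_comm, Nat.cast_mul]

lemma iteratedDeriv_bezier_one {m j : ℕ} (hj : j ≤ m) (q : ℕ → E) :
    iteratedDeriv j (bezier m q) 1 = (m.descFactorial j : ℝ) • (fwdDiff 1)^[j] q (m - j) := by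
  rw [iteratedDeriv_bezier hj, Pi.smul_apply, bezier_one]

end Bezier

theorem constraints_at_one_iff (n m r d : ℕ) (hrm : r ≤ m) (hmn : m ≤ n)
    (p q : ℕ → EuclideanSpace ℝ (Fin d)) :
    (∀ j ≤ r,
        iteratedDeriv j (fun u : ℝ => ∑ i ∈ range (m + 1), bern m i u • q i) 1
          = iteratedDeriv j (fun u : ℝ => ∑ i ∈ range (n + 1), bern n i u • p i) 1) ↔
    (∀ j ≤ r,
        q (m - j) = ((-1 : ℝ) ^ j * (n.choose j : ℝ) * ((m.choose j : ℝ))⁻¹) •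
              fdiffE d j p (n - j)
          - ∑ h ∈ Finset.Icc 1 j, ((-1 : ℝ) ^ h * (j.choose h : ℝ)) • q (m - j + h)) := by
  change (∀ j ≤ r, iteratedDeriv j (bezier m q) 1 = iteratedDeriv j (bezier n p) 1) ↔ _
  refine forall₂_congr fun j hj => ?_
  have hjm : j ≤ m := hj.trans hrm
  have hmj : (m.choose j : ℝ) ≠ 0 := by exact_mod_cast (Nat.choose_pos hjm).ne'
  rw [iteratedDeriv_bezier_one hjm, iteratedDeriv_bezier_one (hjm.trans hmn),
    Nat.descFactorial_eq_factorial_mul_choose, Nat.descFactorial_eq_factorial_mul_choose,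
    Nat.cast_mul, Nat.cast_mul, mul_smul, mul_smul, smul_right_inj (by positivity),
    ← eq_inv_smul_iff₀ hmj, fdiffE_eq_fwdDiff_iter]
  -- multiplying by `(-1)ʲ` folds the right-hand side back into `(-1)ʲ • Δʲq_{m-j}`
  rw [eq_sub_iff_add_eq, ← neg_one_pow_smul_fwdDiff_iter, mul_assoc, mul_comm (n.choose j : ℝ),
    ← smul_smul, ← smul_smul, smul_right_inj (by simp)]
end
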